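/- Let n ≥ 2 and assume the Aliev–Gruber lower bound F(a) > ((n-1)!·a₁⋯aₙ)^{1/(n-1)} - (a₁+⋯+aₙ) holds for all primitive a ∈ ℤⁿ_{>0}. Then there is a constant c(n) such that for all T, (1/#G(T)) ∑_{a∈G(T)} F(a)/(a₁⋯aₙ)^{1/(n-1)} ≥ ((n-1)!)^{1/(n-1)}·(1 - c(n)·T^{-1/(n-1)}). -/

import Mathlib

/-- The set of primitive vectors in `{1,...,T}^n`. -/
def GSet (n T : ℕ) : Finset (Fin n → ℕ) :=
  (Fintype.piFinset fun _ : Fin n => Finset.Icc 1 T).filter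
    (fun a => Finset.univ.gcd a = 1)

/-- The Frobenius number of a vector of positive integers: the largest
integer not representable as a nonnegative integral combination. -/
noncomputable def frob (n : ℕ) (a : Fin n → ℕ) : ℕ :=
  sSup {b : ℕ | ¬ ∃ z : Fin n → ℕ, b = ∑ i, z i * a i}

/-!
Dividing the Aliev–Gruber bound by `(a₁⋯aₙ)^β`, `β = 1/(n-1)`, and averaging over `G(T)` leaves
the error term `(a₁+⋯+aₙ)/(a₁⋯aₙ)^β`. Summed over the whole box `[1,T]ⁿ` it is at most
`nT (∑_{x ≤ T} x^{-β})ⁿ ≤ nT (T^{1-β}/(1-β))ⁿ = n (1-β)^{-n} T^{n-β}`, the sum being bounded by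
telescoping through Bernoulli's inequality. On the other hand at least a twelfth of the box is
primitive, because `∑_{d ≥ 2} d^{-2} < 1`, so the averaged error is `O(T^{-β})`.
-/

open Finset

lemma mul_rpow_sub_one_le_rpow_sub_rpow {x p : ℝ} (hx : 1 ≤ x) (hp0 : 0 ≤ p) (hp1 : p ≤ 1) :
    p * x ^ (p - 1) ≤ x ^ p - (x - 1) ^ p := by
  have hx0 : 0 < x := by linarith
  have bernoulli := rpow_one_add_le_one_add_mul_self (s := -x⁻¹)
    (by linarith [inv_le_one_of_one_le₀ hx]) hp0 hp1
  have hsplit : (x - 1) ^ p = x ^ p * (1 + -x⁻¹) ^ p := by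
    rw [← Real.mul_rpow hx0.le (by linarith [inv_le_one_of_one_le₀ hx])]
    congr 1; field_simp; ring
  rw [hsplit, Real.rpow_sub_one hx0.ne']
  have : 0 ≤ x ^ p := by positivity
  calc p * (x ^ p / x) = x ^ p - x ^ p * (1 + p * -x⁻¹) := by ring
    _ ≤ x ^ p - x ^ p * (1 + -x⁻¹) ^ p := by gcongr

lemma sum_Icc_rpow_neg_le {β : ℝ} (hβ0 : 0 ≤ β) (hβ1 : β < 1) (T : ℕ) :
    ∑ x ∈ Icc 1 T, (x : ℝ) ^ (-β) ≤ (T : ℝ) ^ (1 - β) / (1 - β) := by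
  induction T with
  | zero => simp [Real.zero_rpow (sub_ne_zero.2 hβ1.ne')]
  | succ T ih =>
    rw [sum_Icc_succ_top (by omega)]
    have step := mul_rpow_sub_one_le_rpow_sub_rpow (x := (T + 1 : ℕ)) (p := 1 - β)
      (by simp) (by linarith) (by linarith)
    rw [show 1 - β - 1 = -β by ring, Nat.cast_succ, add_sub_cancel_right] at step
    rw [Nat.cast_succ, le_div_iff₀ (by linarith)] at *
    rw [add_mul]
    linarith

lemma sum_div_prod_rpow_le {ι : Type*} [Fintype ι] {a : ι → ℕ} {T : ℕ} (haT : ∀ i, a i ≤ T)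
    (β : ℝ) :
    (∑ i, (a i : ℝ)) / (∏ i, (a i : ℝ)) ^ β ≤ Fintype.card ι * T * ∏ i, (a i : ℝ) ^ (-β) := by
  have hprod : ∏ i, (a i : ℝ) ^ (-β) = ((∏ i, (a i : ℝ)) ^ β)⁻¹ := by
    rw [← Real.rpow_neg (by positivity), Real.finsetProd_rpow _ _ fun i _ => by positivity]
  have hsum : ∑ i, (a i : ℝ) ≤ Fintype.card ι * T := by
    simpa using sum_le_sum fun i (_ : i ∈ univ) => (Nat.cast_le (α := ℝ)).2 (haT i)
  rw [hprod, div_eq_mul_inv]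
  gcongr

lemma sum_piFinset_sum_div_prod_rpow_le (ι : Type*) [Fintype ι] [DecidableEq ι] {β : ℝ}
    (hβ0 : 0 ≤ β) (hβ1 : β < 1) (T : ℕ) :
    ∑ a ∈ Fintype.piFinset (fun _ : ι => Icc 1 T), (∑ i, (a i : ℝ)) / (∏ i, (a i : ℝ)) ^ β ≤
      Fintype.card ι * T * ((T : ℝ) ^ (1 - β) / (1 - β)) ^ Fintype.card ι := by
  calc _ ≤ ∑ a ∈ Fintype.piFinset (fun _ : ι => Icc 1 T),
          Fintype.card ι * T * ∏ i, (a i : ℝ) ^ (-β) := by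
        refine sum_le_sum fun a ha => sum_div_prod_rpow_le (fun i => ?_) β
        exact (mem_Icc.1 (Fintype.mem_piFinset.1 ha i)).2
    _ = Fintype.card ι * T * (∑ x ∈ Icc 1 T, (x : ℝ) ^ (-β)) ^ Fintype.card ι := by
        rw [← mul_sum, ← prod_univ_sum (fun _ => Icc 1 T) fun _ x => (x : ℝ) ^ (-β),
          prod_const, card_univ]
    _ ≤ _ := by
        gcongr
        exact sum_Icc_rpow_neg_le hβ0 hβ1 T

lemma sum_Icc_two_inv_sq_le (T : ℕ) : ∑ d ∈ Icc 2 T, ((d : ℝ) ^ 2)⁻¹ ≤ 11 / 12 := by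
  have hsub : Icc 2 T ⊆ insert 2 (Ioo 2 (T + 1)) := by
    intro d; simp only [mem_Icc, mem_insert, mem_Ioo]; omega
  calc ∑ d ∈ Icc 2 T, ((d : ℝ) ^ 2)⁻¹
      ≤ ∑ d ∈ insert 2 (Ioo 2 (T + 1)), ((d : ℝ) ^ 2)⁻¹ :=
        sum_le_sum_of_subset_of_nonneg hsub fun _ _ _ => by positivity
    _ = 1 / 4 + ∑ d ∈ Ioo 2 (T + 1), ((d : ℝ) ^ 2)⁻¹ := by
        rw [sum_insert (by simp)]; norm_num
    _ ≤ 1 / 4 + 2 / (2 + 1) := by gcongr; exact_mod_cast sum_Ioo_inv_sq_le 2 (T + 1)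
    _ = 11 / 12 := by norm_num

lemma card_piFinset_Icc_filter_dvd (ι : Type*) [Fintype ι] [DecidableEq ι] (T d : ℕ) :
    #(Fintype.piFinset fun _ : ι => {x ∈ Icc 1 T | d ∣ x}) = (T / d) ^ Fintype.card ι := by
  rw [Fintype.card_piFinset, prod_const, card_univ, ← Nat.Ioc_filter_dvd_card_eq_div,
    ← Finset.Icc_add_one_left_eq_Ioc, zero_add]

lemma not_coprime_subset_biUnion_dvd {n : ℕ} (hn : n ≠ 0) (T : ℕ) :
    {a ∈ Fintype.piFinset fun _ : Fin n => Icc 1 T | univ.gcd a ≠ 1} ⊆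
      (Icc 2 T).biUnion fun d => Fintype.piFinset fun _ : Fin n => {x ∈ Icc 1 T | d ∣ x} := by
  intro a ha
  simp only [mem_filter, Fintype.mem_piFinset, mem_Icc] at ha
  obtain ⟨haT, hg⟩ := ha
  have i₀ : Fin n := ⟨0, Nat.pos_of_ne_zero hn⟩
  have hdvd : ∀ i, univ.gcd a ∣ a i := fun i => gcd_dvd (mem_univ i)
  have hg_le : univ.gcd a ≤ a i₀ := Nat.le_of_dvd (haT i₀).1 (hdvd i₀)
  have hg_pos : 0 < univ.gcd a := Nat.pos_of_dvd_of_pos (hdvd i₀) (haT i₀).1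
  simp only [mem_biUnion, mem_Icc, Fintype.mem_piFinset, mem_filter]
  exact ⟨univ.gcd a, ⟨by omega, hg_le.trans (haT i₀).2⟩, fun i => ⟨haT i, hdvd i⟩⟩

lemma pow_le_twelve_mul_card_GSet {n : ℕ} (hn : 2 ≤ n) (T : ℕ) :
    (T : ℝ) ^ n ≤ 12 * #(GSet n T) := by
  set box := Fintype.piFinset fun _ : Fin n => Icc 1 T
  have hsplit : #(GSet n T) + #{a ∈ box | univ.gcd a ≠ 1} = T ^ n := by
    rw [GSet, card_filter_add_card_filter_not, Fintype.card_piFinset]; simp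
  have hbad : (#{a ∈ box | univ.gcd a ≠ 1} : ℝ) ≤ ∑ d ∈ Icc 2 T, ((T / d : ℕ) : ℝ) ^ n := by
    have := (card_le_card (not_coprime_subset_biUnion_dvd (n := n) (by omega) T)).trans
      card_biUnion_le
    simp only [card_piFinset_Icc_filter_dvd, Fintype.card_fin] at this
    exact_mod_cast this
  have hterm : ∀ d ∈ Icc 2 T, ((T / d : ℕ) : ℝ) ^ n ≤ (T : ℝ) ^ n * ((d : ℝ) ^ 2)⁻¹ := by
    intro d hd
    have hd1 : (1 : ℝ) ≤ d := by exact_mod_cast (by simp at hd; omega : 1 ≤ d)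
    calc ((T / d : ℕ) : ℝ) ^ n ≤ ((T : ℝ) / d) ^ n := by gcongr; exact Nat.cast_div_le
      _ = (T : ℝ) ^ n * ((d : ℝ) ^ n)⁻¹ := by rw [div_pow, div_eq_mul_inv]
      _ ≤ (T : ℝ) ^ n * ((d : ℝ) ^ 2)⁻¹ := by gcongr
  have hsum : ∑ d ∈ Icc 2 T, ((T / d : ℕ) : ℝ) ^ n ≤ (T : ℝ) ^ n * (11 / 12) := by
    refine (sum_le_sum hterm).trans ?_
    rw [← mul_sum]
    gcongr
    exact sum_Icc_two_inv_sq_le T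
  have : ((GSet n T).card : ℝ) + #{a ∈ box | univ.gcd a ≠ 1} = T ^ n := by exact_mod_cast hsplit
  linarith

lemma card_GSet_pos {n : ℕ} (hn : 2 ≤ n) {T : ℕ} (hT : 0 < T) : 0 < #(GSet n T) := by
  have := pow_le_twelve_mul_card_GSet hn T
  have : (0 : ℝ) < T ^ n := by positivity
  exact_mod_cast (by linarith : (0 : ℝ) < #(GSet n T))

lemma frob_two_three_le : frob 2 ![2, 3] ≤ 1 := by
  refine csSup_le' fun b hb => ?_
  by_contra! hb1
  refine hb ?_
  obtain ⟨k, rfl⟩ | ⟨k, rfl⟩ := Nat.even_or_odd b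
  · exact ⟨![k, 0], by simp [Fin.sum_univ_two]; omega⟩
  · exact ⟨![k - 1, 1], by simp [Fin.sum_univ_two]; omega⟩

lemma rpow_sub_div_rpow_le_of_mul_rpow_sub_lt {K P S F β : ℝ} (hK : 0 ≤ K) (hP : 0 < P)
    (h : (K * P) ^ β - S < F) : K ^ β - S / P ^ β ≤ F / P ^ β := by
  have hPβ : 0 < P ^ β := by positivity
  rw [Real.mul_rpow hK hP.le] at h
  calc K ^ β - S / P ^ β = (K ^ β * P ^ β - S) / P ^ β := by field_simp
    _ ≤ F / P ^ β := by gcongr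

lemma mul_rpow_one_sub_pow_eq_pow_mul_rpow_neg {x β : ℝ} (hx : 0 < x) {n : ℕ} (hβn : β * (n - 1) = 1) :
    x * (x ^ (1 - β)) ^ n = x ^ n * x ^ (-β) := by
  calc x * (x ^ (1 - β)) ^ n = x ^ (1 + (1 - β) * n) := by
        rw [Real.rpow_add hx, Real.rpow_one, Real.rpow_mul hx.le, Real.rpow_natCast]
    _ = x ^ ((n : ℝ) + -β) := by congr 1; linarith
    _ = x ^ n * x ^ (-β) := by rw [Real.rpow_add hx, Real.rpow_natCast]

lemma one_div_card_GSet_mul_sum_div_prod_rpow_le {n : ℕ} (hn : 2 ≤ n) {β : ℝ} (hβ0 : 0 ≤ β)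
    (hβ1 : β < 1) (hβn : β * (n - 1) = 1) {T : ℕ} (hT : 0 < T) :
    1 / #(GSet n T) * ∑ a ∈ GSet n T, (∑ i, (a i : ℝ)) / (∏ i, (a i : ℝ)) ^ β ≤
      12 * n / (1 - β) ^ n * (T : ℝ) ^ (-β) := by
  have hT0 : (0 : ℝ) < T := by exact_mod_cast hT
  have hcard := pow_le_twelve_mul_card_GSet hn T
  have hG : (0 : ℝ) < #(GSet n T) := by exact_mod_cast card_GSet_pos hn hT
  have hbox := sum_piFinset_sum_div_prod_rpow_le (Fin n) hβ0 hβ1 T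
  rw [Fintype.card_fin] at hbox
  have hsub : ∑ a ∈ GSet n T, (∑ i, (a i : ℝ)) / (∏ i, (a i : ℝ)) ^ β ≤
      ∑ a ∈ Fintype.piFinset (fun _ : Fin n => Icc 1 T),
        (∑ i, (a i : ℝ)) / (∏ i, (a i : ℝ)) ^ β :=
    sum_le_sum_of_subset_of_nonneg (filter_subset _ _) fun _ _ _ => by positivity
  calc _ ≤ 12 / (T : ℝ) ^ n * (n * T * ((T : ℝ) ^ (1 - β) / (1 - β)) ^ n) := by
        gcongr ?_ * ?_
        · rw [div_le_div_iff₀ hG (by positivity)]; linarith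
        · exact hsub.trans hbox
    _ = 12 * n / (1 - β) ^ n * (T : ℝ) ^ (-β) := by
        rw [div_pow, mul_assoc, ← mul_div_assoc, mul_rpow_one_sub_pow_eq_pow_mul_rpow_neg hT0 hβn]
        field_simp

theorem stmt_19 (n : ℕ) (hn : 2 ≤ n)
    (hAG : ∀ a : Fin n → ℕ, (∀ i, 0 < a i) → Finset.univ.gcd a = 1 →
      ((Nat.factorial (n - 1) : ℝ) * ∏ i, (a i : ℝ)) ^ ((1 : ℝ) / (n - 1))
        - ∑ i, (a i : ℝ) < (frob n a : ℝ)) :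
    ∃ c : ℝ, ∀ T : ℕ, 0 < T →
      (Nat.factorial (n - 1) : ℝ) ^ ((1 : ℝ) / (n - 1)) *
          (1 - c * (T : ℝ) ^ (-(1 : ℝ) / (n - 1))) ≤
        (1 / ((GSet n T).card : ℝ)) *
          ∑ a ∈ GSet n T,
            (frob n a : ℝ) / (∏ i, (a i : ℝ)) ^ ((1 : ℝ) / (n - 1)) := by
  obtain rfl | hn3 := hn.eq_or_lt
  -- For `n = 2` the Aliev–Gruber inequality is an equality, `F(a₁, a₂) = a₁a₂ - a₁ - a₂`,
  -- so its strict form fails, e.g. at `a = (2, 3)`.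
  · have h := hAG ![2, 3] (by decide) (by decide)
    norm_num [Fin.prod_univ_two, Fin.sum_univ_two] at h
    have := frob_two_three_le
    omega
  set β : ℝ := 1 / ((n : ℝ) - 1)
  have hn3' : (3 : ℝ) ≤ n := by exact_mod_cast hn3
  have hβ0 : 0 ≤ β := div_nonneg zero_le_one (by linarith)
  have hβ1 : β < 1 := by rw [div_lt_one (by linarith)]; linarith
  have hβn : β * ((n : ℝ) - 1) = 1 := one_div_mul_cancel (by linarith)
  set K : ℝ := (Nat.factorial (n - 1) : ℝ) ^ β
  have hK : 0 < K := by positivity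
  refine ⟨12 * n / (1 - β) ^ n / K, fun T hT => ?_⟩
  have hpt : ∀ a ∈ GSet n T, K - (∑ i, (a i : ℝ)) / (∏ i, (a i : ℝ)) ^ β ≤
      (frob n a : ℝ) / (∏ i, (a i : ℝ)) ^ β := by
    intro a ha
    simp only [GSet, mem_filter, Fintype.mem_piFinset, mem_Icc] at ha
    have hpos : ∀ i, 0 < a i := fun i => (ha.1 i).1
    exact rpow_sub_div_rpow_le_of_mul_rpow_sub_lt (by positivity)
      (prod_pos fun i _ => by exact_mod_cast hpos i) (hAG a hpos ha.2)
  have herr := one_div_card_GSet_mul_sum_div_prod_rpow_le hn hβ0 hβ1 hβn hT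
  have hG : (0 : ℝ) < #(GSet n T) := by exact_mod_cast card_GSet_pos hn hT
  rw [neg_div]
  calc K * (1 - 12 * n / (1 - β) ^ n / K * (T : ℝ) ^ (-β))
      = K - 12 * n / (1 - β) ^ n * (T : ℝ) ^ (-β) := by field_simp
    _ ≤ 1 / #(GSet n T) * ∑ a ∈ GSet n T, (K - (∑ i, (a i : ℝ)) / (∏ i, (a i : ℝ)) ^ β) := by
        rw [sum_sub_distrib, sum_const, nsmul_eq_mul, mul_sub, ← mul_assoc,
          one_div_mul_cancel hG.ne', one_mul]
        linarith
    _ ≤ _ := by gcongr with a ha; exact hpt a ha
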